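/- Let k = ℚ(√Δ) be an imaginary quadratic field with Δ < 0 a squarefree even integer, O_k its ring of integers, and for N ≥ 1 let ρ(N) denote the number of nonzero ideals of O_k of absolute norm N. Let D be a squarefree positive integer every prime factor of which is inert in k. Suppose χ : ℕ → ℤ is completely multiplicative and satisfies, for every prime p: χ(p) = 1 if p is split in k, χ(p) = 0 if p is ramified in k, and χ(p) = −1 if p is inert in k. Then for every integer m > 0: the sum of ρ(m/ν) over the positive divisors ν of D which also divide m equals the sum of χ(a) over the positive divisors a of m that are coprime to D. -/

import Mathlib

/-!
Both sides are values at `m` of Dirichlet convolutions. Counting nonzero ideals by norm gives a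
multiplicative function `ρ`, because an ideal `I` of norm `ab` with `a, b` coprime factors uniquely
as `(I + aO)(I + bO)` with factors of norms `a` and `b`. At a prime power, the three ways `p` can
decompose in a quadratic ring give `ρ(p^e) = ∑_{i ≤ e} χ(p)^i`, i.e. `ρ = χ * 1`. The left side is
`(1_{· ∣ D} * ρ)(m)`, and `1_{· ∣ D} * χ = χ · 1_{(·, D) = 1}` since `χ = μ` on the divisors of
the squarefree number `D` all of whose prime factors are inert. Convolving with `1` gives the
right side.
-/

open NumberField Ideal Polynomial Finset ArithmeticFunction
open scoped ArithmeticFunction.zeta ArithmeticFunction.Moebius ArithmeticFunction.Omega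

theorem Nat.filter_dvd_divisors_eq_divisors_gcd {n : ℕ} (hn : n ≠ 0) (D : ℕ) :
    n.divisors.filter (· ∣ D) = (n.gcd D).divisors := by
  ext d
  simp [Nat.dvd_gcd_iff, hn]

theorem Nat.eq_of_dvd_of_dvd_of_mul_eq {a b c d : ℕ} (hca : c ∣ a) (hdb : d ∣ b)
    (h : c * d = a * b) (hab : a * b ≠ 0) : c = a ∧ d = b := by
  obtain ⟨x, rfl⟩ := hca
  obtain ⟨y, rfl⟩ := hdb
  have hcd : c * d ≠ 0 := h ▸ hab
  have hxy : x * y = 1 :=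
    Nat.eq_of_mul_eq_mul_left (Nat.pos_of_ne_zero hcd) (by rw [mul_one]; nth_rw 2 [h]; ring)
  simp [Nat.eq_one_of_mul_eq_one_right hxy, Nat.eq_one_of_mul_eq_one_left hxy]

theorem Nat.Prime.eq_self_of_mul_eq_sq {p x y : ℕ} (hp : p.Prime) (h : x * y = p ^ 2)
    (hx : x ≠ 1) (hy : y ≠ 1) : x = p ∧ y = p := by
  obtain ⟨k, hk, rfl⟩ := (Nat.dvd_prime_pow hp).mp (Dvd.intro y h)
  have hp2 : p ^ 2 ≠ 0 := pow_ne_zero 2 hp.ne_zero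
  interval_cases k
  · exact absurd (pow_zero p) hx
  · exact ⟨pow_one p, Nat.eq_of_mul_eq_mul_left hp.pos (by rw [← sq, ← h, pow_one])⟩
  · exact absurd ((mul_eq_left₀ hp2).mp h) hy

theorem Prime.pow_dvd_pow_mul_pow_iff {M : Type*} [CommMonoidWithZero M] [IsCancelMulZero M]
    {P Q : M} (hP : Prime P) (hPQ : ¬P ∣ Q) {i j n : ℕ} : P ^ i ∣ P ^ j * Q ^ n ↔ i ≤ j :=
  ⟨fun h => (pow_dvd_pow_iff hP.ne_zero hP.not_isUnit).mp
      (hP.pow_dvd_of_dvd_mul_right i (fun h' => hPQ (hP.dvd_of_dvd_pow h')) h),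
    fun h => (pow_dvd_pow P h).mul_right _⟩

theorem Module.finrank_eq_two_of_sq_eq_algebraMap {F K : Type*} [Field F] [Field K] [Algebra F K]
    {d : F} (hd : ∀ b : F, b ^ 2 ≠ d) {α : K} (hα : α ^ 2 = algebraMap F K d)
    (hgen : Algebra.adjoin F {α} = ⊤) : Module.finrank F K = 2 := by
  have hroot : aeval α (X ^ 2 - C d) = 0 := by simp [hα]
  have hmonic : (X ^ 2 - C d).Monic := monic_X_pow_sub_C d two_ne_zero
  have hmin : minpoly F α = X ^ 2 - C d :=
    (minpoly.eq_of_irreducible_of_monic (X_pow_sub_C_irreducible_of_prime Nat.prime_two hd)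
      hroot hmonic).symm
  have hint : IsIntegral F α := ⟨_, hmonic, by rwa [← aeval_def]⟩
  rw [(PowerBasis.ofAdjoinEqTop hint hgen).finrank, PowerBasis.ofAdjoinEqTop_dim,
    hmin, natDegree_X_pow_sub_C]

theorem MonoidHom.map_eq_neg_one_pow_cardFactors (χ : ℕ →* ℤ) {n : ℕ} (hn : n ≠ 0)
    (hχ : ∀ p, p.Prime → p ∣ n → χ p = -1) : χ n = (-1) ^ Ω n := by
  conv_lhs => rw [← Nat.prod_primeFactorsList hn]
  rw [map_list_prod, cardFactors_apply, ← List.prod_replicate, ← List.map_const']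
  congr 1
  exact List.map_congr_left fun p hp =>
    hχ p (Nat.prime_of_mem_primeFactorsList hp) (Nat.dvd_of_mem_primeFactorsList hp)

theorem MonoidHom.map_eq_moebius (χ : ℕ →* ℤ) {n : ℕ} (hn : Squarefree n)
    (hχ : ∀ p, p.Prime → p ∣ n → χ p = -1) : χ n = μ n := by
  rw [χ.map_eq_neg_one_pow_cardFactors hn.ne_zero hχ, moebius_apply_of_squarefree hn]

namespace ArithmeticFunction

variable {R : Type*}

def ofFun [Zero R] (g : ℕ → R) : ArithmeticFunction R :=
  ⟨fun n => if n = 0 then 0 else g n, if_pos rfl⟩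

theorem ofFun_apply [Zero R] (g : ℕ → R) {n : ℕ} (hn : n ≠ 0) : ofFun g n = g n :=
  if_neg hn

theorem isMultiplicative_ofFun [MonoidWithZero R] {g : ℕ → R} (h1 : g 1 = 1)
    (hmul : ∀ {a b : ℕ}, a.Coprime b → g (a * b) = g a * g b) : (ofFun g).IsMultiplicative :=
  IsMultiplicative.iff_ne_zero.mpr
    ⟨by rwa [ofFun_apply g one_ne_zero], fun ha hb hab => by
      rw [ofFun_apply g (mul_ne_zero ha hb), ofFun_apply g ha, ofFun_apply g hb, hmul hab]⟩

theorem ofFun_mul_apply [Semiring R] (g : ℕ → R) (f : ArithmeticFunction R) (n : ℕ) :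
    (ofFun g * f) n = ∑ d ∈ n.divisors, g d * f (n / d) := by
  rw [mul_apply, Nat.sum_divisorsAntidiagonal fun d e => ofFun g d * f e]
  exact sum_congr rfl fun _ hd => by rw [ofFun_apply g (Nat.ne_of_gt (Nat.pos_of_mem_divisors hd))]

theorem sum_divisors_ofFun [AddCommMonoid R] (g : ℕ → R) (n : ℕ) :
    ∑ d ∈ n.divisors, ofFun g d = ∑ d ∈ n.divisors, g d :=
  sum_congr rfl fun _ hd => ofFun_apply g (Nat.ne_of_gt (Nat.pos_of_mem_divisors hd))

theorem sum_filter_dvd_eq_ofFun_mul_apply [Semiring R] (f : ArithmeticFunction R) {D : ℕ}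
    (hD : D ≠ 0) (m : ℕ) :
    ∑ ν ∈ D.divisors.filter (· ∣ m), f (m / ν) =
      ((ofFun fun n => if n ∣ D then (1 : R) else 0) * f) m := by
  rcases eq_or_ne m 0 with rfl | hm
  · simp
  rw [ofFun_mul_apply]
  simp_rw [ite_mul, one_mul, zero_mul]
  rw [← sum_filter, Nat.filter_dvd_divisors_eq_divisors_gcd hm,
    Nat.filter_dvd_divisors_eq_divisors_gcd hD, Nat.gcd_comm]

theorem ofFun_dvd_mul_ofFun_eq (χ : ℕ →* ℤ) {D : ℕ} (hD : Squarefree D)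
    (hχ : ∀ p, p.Prime → p ∣ D → χ p = -1) :
    (ofFun fun n => if n ∣ D then 1 else 0) * ofFun χ =
      ofFun fun n => if n.Coprime D then χ n else 0 := by
  ext n
  rcases eq_or_ne n 0 with rfl | hn
  · simp
  have hsum_moebius : ∑ d ∈ (n.gcd D).divisors, μ d = if n.Coprime D then 1 else 0 := by
    rw [← coe_mul_zeta_apply, moebius_mul_coe_zeta, one_apply]
  have hquot : ∀ d ∈ (n.gcd D).divisors, ofFun χ (n / d) = μ d * χ n := fun d hd => by
    obtain ⟨hdn, hdD⟩ := Nat.dvd_gcd_iff.mp (Nat.dvd_of_mem_divisors hd)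
    have hsq : Squarefree d := hD.squarefree_of_dvd hdD
    have hdpos : d ≠ 0 := Nat.ne_of_gt (Nat.pos_of_mem_divisors hd)
    rw [ofFun_apply _ ((Nat.div_ne_zero_iff_of_dvd hdn).mpr ⟨hn, hdpos⟩)]
    calc χ (n / d) = μ d ^ 2 * χ (n / d) := by
          rw [moebius_sq_eq_one_of_squarefree hsq, one_mul]
      _ = μ d * χ (d * (n / d)) := by
          rw [map_mul, χ.map_eq_moebius hsq fun p hp hpd => hχ p hp (hpd.trans hdD)]
          ring
      _ = μ d * χ n := by rw [Nat.mul_div_cancel' hdn]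
  rw [ofFun_mul_apply]
  calc (∑ d ∈ n.divisors, (if d ∣ D then 1 else 0) * ofFun χ (n / d))
      = ∑ d ∈ (n.gcd D).divisors, μ d * χ n := by
        simp_rw [ite_mul, one_mul, zero_mul]
        rw [← sum_filter, Nat.filter_dvd_divisors_eq_divisors_gcd hn D]
        exact sum_congr rfl hquot
    _ = (∑ d ∈ (n.gcd D).divisors, μ d) * χ n := (sum_mul ..).symm
    _ = _ := by rw [hsum_moebius, ofFun_apply _ hn, ite_mul, one_mul, zero_mul]

end ArithmeticFunction

namespace Ideal

structure IsSplittingCharacter (S : Type*) [CommRing S] (χ : ℕ →* ℤ) : Prop where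
  apply_of_split : ∀ p : ℕ, p.Prime →
    (∃ P Q : Ideal S, P.IsPrime ∧ Q.IsPrime ∧ P ≠ Q ∧ span {(p : S)} = P * Q) → χ p = 1
  apply_of_ramified : ∀ p : ℕ, p.Prime →
    (∃ P : Ideal S, P.IsPrime ∧ span {(p : S)} = P ^ 2) → χ p = 0
  apply_of_inert : ∀ p : ℕ, p.Prime → (span {(p : S)}).IsPrime → χ p = -1

variable {S : Type*} [CommRing S] [IsDedekindDomain S] [Module.Free ℤ S]

theorem eq_of_le_of_absNorm_eq {I J : Ideal S} (h : J ≤ I) (hJ : absNorm J ≠ 0)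
    (hIJ : absNorm I = absNorm J) : I = J := by
  obtain ⟨L, rfl⟩ := dvd_iff_le.mpr h
  rw [map_mul] at hJ hIJ
  rw [absNorm_eq_one_iff.mp ((mul_eq_left₀ (left_ne_zero_of_mul hJ)).mp hIJ.symm), mul_top]

theorem eq_sup_span_mul_sup_span {I : Ideal S} {a b : ℕ} (hab : a.Coprime b)
    (hI : absNorm I = a * b) :
    I = (I ⊔ span {(a : S)}) * (I ⊔ span {(b : S)}) := by
  have hcop : span {(a : S)} ⊔ span {(b : S)} = ⊤ :=
    isCoprime_iff_sup_eq.mp ((isCoprime_span_singleton_iff _ _).mpr hab.cast)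
  apply le_antisymm
  · calc I = I * (span {(a : S)} ⊔ span {(b : S)}) := by rw [hcop, mul_top]
      _ ≤ _ := by
        rw [mul_sup, mul_comm I]
        exact sup_le (mul_mono le_sup_right le_sup_left) (mul_mono le_sup_left le_sup_right)
  · rw [sup_mul, mul_sup, mul_sup, span_singleton_mul_span_singleton, ← Nat.cast_mul, ← hI]
    exact sup_le (sup_le mul_le_right mul_le_left)
      (sup_le mul_le_right (span_singleton_absNorm_le I))

theorem dvd_span_pow_of_absNorm_eq_pow {I : Ideal S} {p e : ℕ} (hI : absNorm I = p ^ e) :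
    I ∣ span {(p : S)} ^ e := by
  rw [span_singleton_pow, ← Nat.cast_pow, ← hI]
  exact dvd_iff_le.mpr (span_singleton_absNorm_le I)

theorem card_absNorm_eq_pow_of_span_eq_pow {P : Ideal S} (hP : Prime P)
    {p k f : ℕ} (hp : 1 < p) (hspan : span {(p : S)} = P ^ k) (hPn : absNorm P = p ^ f)
    (hf : f ≠ 0) (e : ℕ) :
    Nat.card {I : Ideal S // absNorm I = p ^ e} = if f ∣ e then 1 else 0 := by
  have hnorm : ∀ i, absNorm (P ^ i) = p ^ e ↔ f * i = e := fun i => by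
    rw [map_pow, hPn, ← pow_mul, Nat.pow_right_inj hp]
  have hpow : ∀ I : {I : Ideal S // absNorm I = p ^ e}, ∃ i, I.1 = P ^ i := fun I => by
    have hdvd := dvd_span_pow_of_absNorm_eq_pow I.2
    rw [hspan, ← pow_mul] at hdvd
    obtain ⟨i, -, hi⟩ := (dvd_prime_pow hP _).mp hdvd
    exact ⟨i, associated_iff_eq.mp hi⟩
  split_ifs with hfe
  · obtain ⟨i, rfl⟩ := hfe
    refine Nat.card_eq_one_iff_exists.mpr ⟨⟨P ^ i, (hnorm i).mpr rfl⟩, fun I => Subtype.ext ?_⟩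
    obtain ⟨j, hj⟩ := hpow I
    have hji : f * j = f * i := (hnorm j).mp (hj ▸ I.2)
    rw [hj, Nat.eq_of_mul_eq_mul_left (Nat.pos_of_ne_zero hf) hji]
  · refine Nat.card_eq_zero.mpr (Or.inl ⟨fun I => ?_⟩)
    obtain ⟨j, hj⟩ := hpow I
    exact hfe ⟨j, ((hnorm j).mp (hj ▸ I.2)).symm⟩

theorem card_absNorm_eq_pow_of_span_eq_mul {P Q : Ideal S} (hP : Prime P)
    (hQ : Prime Q) (hPQ : P ≠ Q) {p : ℕ} (hp : 1 < p) (hspan : span {(p : S)} = P * Q)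
    (hPn : absNorm P = p) (hQn : absNorm Q = p) (e : ℕ) :
    Nat.card {I : Ideal S // absNorm I = p ^ e} = e + 1 := by
  have hPQ' : ¬P ∣ Q := fun h => hPQ (associated_iff_eq.mp (hP.associated_of_dvd hQ h))
  have hnorm : ∀ i j, absNorm (P ^ i * Q ^ j) = p ^ (i + j) := fun i j => by
    rw [map_mul, map_pow, map_pow, hPn, hQn, pow_add]
  have hset : {I : Ideal S | absNorm I = p ^ e} =
      ((range (e + 1)).image fun i => P ^ i * Q ^ (e - i) : Finset (Ideal S)) := by
    ext I
    simp only [Set.mem_ofPred_eq, coe_image, coe_range, Set.mem_image, Set.mem_Iio]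
    constructor
    · intro hI
      have hdvd := dvd_span_pow_of_absNorm_eq_pow hI
      rw [hspan, mul_pow] at hdvd
      obtain ⟨I₁, I₂, h₁, h₂, rfl⟩ := exists_dvd_and_dvd_of_dvd_mul hdvd
      obtain ⟨i, -, hi⟩ := (dvd_prime_pow hP _).mp h₁
      obtain ⟨j, -, hj⟩ := (dvd_prime_pow hQ _).mp h₂
      rw [associated_iff_eq.mp hi, associated_iff_eq.mp hj] at hI ⊢
      rw [hnorm, Nat.pow_right_inj hp] at hI
      exact ⟨i, by omega, by rw [← hI, Nat.add_sub_cancel_left]⟩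
    · rintro ⟨i, hi, rfl⟩
      rw [hnorm, Nat.add_sub_cancel' (Nat.le_of_lt_succ hi)]
  rw [← Set.coe_ofPred, Nat.card_coe_set_eq, hset, Set.ncard_coe_finset, card_image_of_injOn,
    card_range]
  intro i _ j _ hij
  have hdvd : ∀ {i j}, P ^ i * Q ^ (e - i) = P ^ j * Q ^ (e - j) → i ≤ j := fun h =>
    (hP.pow_dvd_pow_mul_pow_iff hPQ').mp (h ▸ dvd_mul_right _ _)
  exact le_antisymm (hdvd hij) (hdvd hij.symm)

variable [Module.Finite ℤ S]

-- The function `ρ` of the header.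
variable (S) in
noncomputable def absNormCount : ArithmeticFunction ℤ :=
  ⟨fun n => Nat.card {I : Ideal S // I ≠ ⊥ ∧ absNorm I = n}, by
    have : IsEmpty {I : Ideal S // I ≠ ⊥ ∧ absNorm I = 0} :=
      ⟨fun I => I.2.1 (absNorm_eq_zero_iff.mp I.2.2)⟩
    simp⟩

theorem absNormCount_apply {n : ℕ} (hn : n ≠ 0) :
    absNormCount S n = Nat.card {I : Ideal S // absNorm I = n} :=
  congrArg _ (Nat.card_congr (Equiv.subtypeEquivRight fun I =>
    ⟨And.right, fun h => ⟨fun hI => hn (by rw [← h, hI, absNorm_bot]), h⟩⟩))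

theorem absNorm_sup_span_dvd {I : Ideal S} {a b : ℕ} (hab : a.Coprime b)
    (hI : absNorm I = a * b) : absNorm (I ⊔ span {(a : S)}) ∣ a := by
  have hdvd_pow : absNorm (I ⊔ span {(a : S)}) ∣ a ^ Module.finrank ℤ S :=
    absNorm_span_natCast (S := S) a ▸ absNorm_dvd_absNorm_of_le le_sup_right
  exact ((Nat.Coprime.pow_left _ hab).coprime_dvd_left hdvd_pow).dvd_of_dvd_mul_right
    (hI ▸ absNorm_dvd_absNorm_of_le le_sup_left)

theorem absNorm_sup_span_eq {I : Ideal S} {a b : ℕ} (hab : a.Coprime b)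
    (hab0 : a * b ≠ 0) (hI : absNorm I = a * b) :
    absNorm (I ⊔ span {(a : S)}) = a ∧ absNorm (I ⊔ span {(b : S)}) = b := by
  refine Nat.eq_of_dvd_of_dvd_of_mul_eq (absNorm_sup_span_dvd hab hI)
    (absNorm_sup_span_dvd hab.symm (mul_comm a b ▸ hI)) ?_ hab0
  rw [← map_mul, ← eq_sup_span_mul_sup_span hab hI, hI]

theorem mul_sup_span_eq {I J : Ideal S} {a b : ℕ} (hab : a.Coprime b)
    (hI : absNorm I = a) (hJ : absNorm J = b) (hab0 : a * b ≠ 0) :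
    I * J ⊔ span {(a : S)} = I := by
  have hIJ : absNorm (I * J) = a * b := by rw [map_mul, hI, hJ]
  refine (eq_of_le_of_absNorm_eq ?_ ?_ ?_).symm
  · exact sup_le mul_le_left ((span_singleton_le_iff_mem _).mpr (hI ▸ absNorm_mem I))
  · rw [(absNorm_sup_span_eq hab hab0 hIJ).1]; exact left_ne_zero_of_mul hab0
  · rw [(absNorm_sup_span_eq hab hab0 hIJ).1, hI]

theorem absNormCount_mul {a b : ℕ} (hab : a.Coprime b) (hab0 : a * b ≠ 0) :
    absNormCount S (a * b) = absNormCount S a * absNormCount S b := by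
  have ha : a ≠ 0 := left_ne_zero_of_mul hab0
  have hb : b ≠ 0 := right_ne_zero_of_mul hab0
  let e : {I : Ideal S // absNorm I = a * b} ≃
      {I : Ideal S // absNorm I = a} × {I : Ideal S // absNorm I = b} :=
    { toFun := fun I => (⟨I.1 ⊔ span {(a : S)}, (absNorm_sup_span_eq hab hab0 I.2).1⟩,
        ⟨I.1 ⊔ span {(b : S)}, (absNorm_sup_span_eq hab hab0 I.2).2⟩)
      invFun := fun J => ⟨J.1.1 * J.2.1, by rw [map_mul, J.1.2, J.2.2]⟩
      left_inv := fun I => Subtype.ext (eq_sup_span_mul_sup_span hab I.2).symm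
      right_inv := fun J => Prod.ext (Subtype.ext (mul_sup_span_eq hab J.1.2 J.2.2 hab0))
        (Subtype.ext (show J.1.1 * J.2.1 ⊔ span {(b : S)} = J.2.1 by
          rw [mul_comm]
          exact mul_sup_span_eq hab.symm J.2.2 J.1.2 (by rwa [mul_comm]))) }
  rw [absNormCount_apply hab0, absNormCount_apply ha, absNormCount_apply hb, Nat.card_congr e,
    Nat.card_prod, Nat.cast_mul]

theorem isMultiplicative_absNormCount : (absNormCount S).IsMultiplicative := by
  refine IsMultiplicative.iff_ne_zero.mpr
    ⟨?_, fun ha hb hab => absNormCount_mul hab (mul_ne_zero ha hb)⟩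
  rw [absNormCount_apply one_ne_zero, Nat.cast_eq_one, Nat.card_eq_one_iff_exists]
  exact ⟨⟨⊤, absNorm_top⟩, fun I => Subtype.ext (absNorm_eq_one_iff.mp I.2)⟩

theorem span_natCast_prime_or_eq_sq_or_eq_mul (hS : Module.finrank ℤ S = 2) {p : ℕ} (hp : p.Prime) :
    Prime (span {(p : S)}) ∨
      (∃ P : Ideal S, Prime P ∧ absNorm P = p ∧ span {(p : S)} = P ^ 2) ∨
      (∃ P Q : Ideal S, Prime P ∧ Prime Q ∧ P ≠ Q ∧ absNorm P = p ∧ absNorm Q = p ∧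
        span {(p : S)} = P * Q) := by
  have hN : absNorm (span {(p : S)}) = p ^ 2 := by rw [absNorm_span_natCast, hS]
  have hN0 : span {(p : S)} ≠ ⊥ := fun h => by
    rw [h, absNorm_bot] at hN
    exact pow_ne_zero 2 hp.ne_zero hN.symm
  have hNu : ¬IsUnit (span {(p : S)}) := fun h => by
    rw [isUnit_iff.mp h, absNorm_top] at hN
    exact hp.one_lt.ne' ((Nat.pow_eq_one.mp hN.symm).resolve_right two_ne_zero)
  by_cases hprime : Prime (span {(p : S)})
  · exact Or.inl hprime
  obtain ⟨P, hPirr, J, hspan⟩ := WfDvdMonoid.exists_irreducible_factor hNu hN0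
  have hP : Prime P := hPirr.prime
  obtain ⟨hPn, hJn⟩ := hp.eq_self_of_mul_eq_sq (by rw [← map_mul, ← hspan, hN])
    (absNorm_eq_one_iff.not.mpr fun h => hP.not_isUnit (isUnit_iff.mpr h))
    (absNorm_eq_one_iff.not.mpr fun h => hprime (by rwa [hspan, h, mul_top]))
  have hJ : Prime J := (prime_iff_isPrime fun h => hp.ne_zero (by rw [← hJn, h, absNorm_bot])).mpr
    (isPrime_of_irreducible_absNorm (hJn ▸ hp))
  by_cases hPJ : P = J
  · exact Or.inr (Or.inl ⟨P, hP, hPn, by rw [hspan, ← hPJ, sq]⟩)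
  · exact Or.inr (Or.inr ⟨P, J, hP, hJ, hPJ, hPn, hJn, hspan⟩)

theorem absNormCount_prime_pow (hS : Module.finrank ℤ S = 2) {χ : ℕ →* ℤ}
    (hχ : IsSplittingCharacter S χ) {p : ℕ} (hp : p.Prime) (e : ℕ) :
    absNormCount S (p ^ e) = ∑ i ∈ range (e + 1), χ p ^ i := by
  rw [absNormCount_apply (pow_ne_zero e hp.ne_zero)]
  rcases span_natCast_prime_or_eq_sq_or_eq_mul hS hp with
    hinert | ⟨P, hP, hPn, hram⟩ | ⟨P, Q, hP, hQ, hPQ, hPn, hQn, hsplit⟩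
  · rw [card_absNorm_eq_pow_of_span_eq_pow hinert hp.one_lt (pow_one _).symm
      (by rw [absNorm_span_natCast, hS]) two_ne_zero,
      hχ.apply_of_inert p hp (isPrime_of_prime hinert), neg_one_geom_sum]
    by_cases h : Even e <;> simp [h, Nat.even_add_one, ← even_iff_two_dvd]
  · rw [card_absNorm_eq_pow_of_span_eq_pow hP hp.one_lt hram (by rw [hPn, pow_one]) one_ne_zero,
      hχ.apply_of_ramified p hp ⟨P, isPrime_of_prime hP, hram⟩, zero_geom_sum]
    simp
  · rw [card_absNorm_eq_pow_of_span_eq_mul hP hQ hPQ hp.one_lt hsplit hPn hQn,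
      hχ.apply_of_split p hp ⟨P, Q, isPrime_of_prime hP, isPrime_of_prime hQ, hPQ, hsplit⟩]
    simp

theorem absNormCount_eq_ofFun_mul_zeta (hS : Module.finrank ℤ S = 2) {χ : ℕ →* ℤ}
    (hχ : IsSplittingCharacter S χ) : absNormCount S = ofFun χ * ζ := by
  refine (isMultiplicative_absNormCount.eq_iff_eq_on_prime_powers _ _
    ((isMultiplicative_ofFun χ.map_one fun _ => map_mul ..).mul
      isMultiplicative_zeta.natCast)).mpr fun p e hp => ?_
  rw [absNormCount_prime_pow hS hχ hp, coe_mul_zeta_apply, Nat.sum_divisors_prime_pow hp]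
  exact sum_congr rfl fun i _ => by rw [ofFun_apply _ (pow_ne_zero i hp.ne_zero), map_pow]

end Ideal

theorem rho_divisor_sum_eq_character_sum_general
    (Δ : ℤ) (hΔneg : Δ < 0)
    (K : Type*) [Field K] [NumberField K]
    (α : K) (hα : α ^ 2 = (Δ : K)) (hgen : Algebra.adjoin ℚ {α} = ⊤)
    (D : ℕ) (hDsq : Squarefree D)
    (hDinert : ∀ p : ℕ, p.Prime → p ∣ D → (Ideal.span {(p : 𝓞 K)}).IsPrime)
    (χ : ℕ → ℤ) (hχ1 : χ 1 = 1) (hχmul : ∀ m n : ℕ, χ (m * n) = χ m * χ n)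
    (hsplit : ∀ p : ℕ, p.Prime →
      (∃ P Q : Ideal (𝓞 K), P.IsPrime ∧ Q.IsPrime ∧ P ≠ Q ∧
        Ideal.span {(p : 𝓞 K)} = P * Q) → χ p = 1)
    (hram : ∀ p : ℕ, p.Prime →
      (∃ P : Ideal (𝓞 K), P.IsPrime ∧ Ideal.span {(p : 𝓞 K)} = P ^ 2) → χ p = 0)
    (hinert : ∀ p : ℕ, p.Prime →
      (Ideal.span {(p : 𝓞 K)}).IsPrime → χ p = -1)
    (m : ℕ) :
    (∑ ν ∈ D.divisors.filter (· ∣ m),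
        (Nat.card {I : Ideal (𝓞 K) // I ≠ ⊥ ∧ Ideal.absNorm I = m / ν} : ℤ))
      = ∑ a ∈ m.divisors.filter (fun a => Nat.Coprime a D), χ a := by
  have hS : Module.finrank ℤ (𝓞 K) = 2 := by
    rw [RingOfIntegers.rank]
    refine Module.finrank_eq_two_of_sq_eq_algebraMap (d := (Δ : ℚ)) (fun b hb => ?_)
      (by rw [hα, map_intCast]) hgen
    exact (Int.cast_lt_zero.mpr hΔneg).not_ge (hb ▸ sq_nonneg b)
  let χ' : ℕ →* ℤ := ⟨⟨χ, hχ1⟩, hχmul⟩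
  calc _ = ∑ ν ∈ D.divisors.filter (· ∣ m), absNormCount (𝓞 K) (m / ν) := rfl
    _ = ((ofFun fun n => if n ∣ D then (1 : ℤ) else 0) * ofFun χ' *
        (ζ : ArithmeticFunction ℤ)) m := by
      rw [sum_filter_dvd_eq_ofFun_mul_apply _ hDsq.ne_zero,
        absNormCount_eq_ofFun_mul_zeta (χ := χ') hS ⟨hsplit, hram, hinert⟩, ← mul_assoc]
    _ = _ := by
      rw [ofFun_dvd_mul_ofFun_eq χ' hDsq fun p hp hpD => hinert p hp (hDinert p hp hpD),
        coe_mul_zeta_apply, sum_divisors_ofFun, sum_filter]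
      rfl

/-- The paper's key counting lemma: with `k = ℚ(√Δ)` (`Δ < 0` even squarefree),
`ρ(N)` the number of nonzero ideals of `O_k` of norm `N`, `D` squarefree with all
prime factors inert in `k`, and `χ` the quadratic character of `k`, one has
`∑_{ν ∣ D, ν ∣ m} ρ(m/ν) = ∑_{a ∣ m, (a,D)=1} χ(a)` for every `m > 0`. -/
theorem rho_divisor_sum_eq_character_sum
    (Δ : ℤ) (hΔneg : Δ < 0) (hΔsq : Squarefree Δ) (hΔeven : Even Δ)
    (K : Type*) [Field K] [NumberField K]
    (α : K) (hα : α ^ 2 = (Δ : K)) (hgen : Algebra.adjoin ℚ {α} = ⊤)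
    (D : ℕ) (hD : 0 < D) (hDsq : Squarefree D)
    (hDinert : ∀ p : ℕ, p.Prime → p ∣ D → (Ideal.span {(p : 𝓞 K)}).IsPrime)
    (χ : ℕ → ℤ) (hχ1 : χ 1 = 1) (hχmul : ∀ m n : ℕ, χ (m * n) = χ m * χ n)
    (hsplit : ∀ p : ℕ, p.Prime →
      (∃ P Q : Ideal (𝓞 K), P.IsPrime ∧ Q.IsPrime ∧ P ≠ Q ∧
        Ideal.span {(p : 𝓞 K)} = P * Q) → χ p = 1)
    (hram : ∀ p : ℕ, p.Prime →
      (∃ P : Ideal (𝓞 K), P.IsPrime ∧ Ideal.span {(p : 𝓞 K)} = P ^ 2) → χ p = 0)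
    (hinert : ∀ p : ℕ, p.Prime →
      (Ideal.span {(p : 𝓞 K)}).IsPrime → χ p = -1)
    (m : ℕ) (hm : 0 < m) :
    (∑ ν ∈ D.divisors.filter (· ∣ m),
        (Nat.card {I : Ideal (𝓞 K) // I ≠ ⊥ ∧ Ideal.absNorm I = m / ν} : ℤ))
      = ∑ a ∈ m.divisors.filter (fun a => Nat.Coprime a D), χ a :=
  rho_divisor_sum_eq_character_sum_general Δ hΔneg K α hα hgen D hDsq hDinert χ hχ1 hχmul hsplit
    hram hinert m
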